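/- arXiv:2605.07506 — 4 statements merged into one kernel-verified Lean document; each statement's English description precedes it below -/
import Mathlib

section
/- If T is a posinormal bounded operator on a Hilbert space H, then Kernel(T) ⊆ Kernel(T^*), and consequently Kernel(T) is a reducing subspace for T. -/
open Complex Metric
open scoped InnerProductSpace

noncomputable section

/-- The Hardy space `H²(𝔻)`, modeled as the Hilbert space of square-summable
Taylor coefficient sequences. -/
abbrev H2 : Type := lp (fun _ : ℕ => ℂ) 2

/-- The analytic function on the unit disk represented by an element of `H²`. -/
noncomputable def H2.toFun (f : H2) (z : ℂ) : ℂ := ∑' k, f k * z ^ k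

/-- `T` is posinormal if `T T* = T* P T` for some positive operator `P`. -/
def Posinormal {H : Type*} [NormedAddCommGroup H] [InnerProductSpace ℂ H] [CompleteSpace H]
    (T : H →L[ℂ] H) : Prop :=
  ∃ P : H →L[ℂ] H, P.IsPositive ∧
    T ∘L ContinuousLinearMap.adjoint T = ContinuousLinearMap.adjoint T ∘L P ∘L T

/-- `T` realizes the weighted composition-differentiation operator `D_{ψ,φ,n}` on `H²`. -/
def IsWCD (ψ φ : ℂ → ℂ) (n : ℕ) (T : H2 →L[ℂ] H2) : Prop :=
  ∀ f : H2, ∀ z ∈ ball (0 : ℂ) 1,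
    H2.toFun (T f) z = ψ z * iteratedDeriv n (H2.toFun f) (φ z)

open ContinuousLinearMap Module.End

section

variable {𝕜 H : Type*} [RCLike 𝕜] [NormedAddCommGroup H] [InnerProductSpace 𝕜 H]
  [CompleteSpace H]

theorem ContinuousLinearMap.ker_le_ker_adjoint_of_comp_adjoint_eq {T S : H →L[𝕜] H}
    (h : T ∘L adjoint T = S ∘L T) : T.ker ≤ (adjoint T).ker := by
  rw [← ker_self_comp_adjoint, h]
  exact fun x (hx : T x = 0) ↦ by simp [hx]

theorem ContinuousLinearMap.orthogonal_ker_mem_invtSubmodule {T : H →L[𝕜] H}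
    (h : T.ker ≤ (adjoint T).ker) : T.kerᗮ ∈ invtSubmodule (T : H →ₗ[𝕜] H) :=
  orthogonal_mem_invtSubmodule <| (mem_invtSubmodule_iff_forall_mem_of_mem _).mpr
    fun x hx ↦ by rw [coe_coe, show adjoint T x = 0 from h hx]; exact zero_mem _

end

theorem Posinormal.ker_le_ker_adjoint {H : Type*} [NormedAddCommGroup H] [InnerProductSpace ℂ H]
    [CompleteSpace H] {T : H →L[ℂ] H} (hT : Posinormal T) : T.ker ≤ (adjoint T).ker :=
  let ⟨P, _, hP⟩ := hT
  ker_le_ker_adjoint_of_comp_adjoint_eq (S := adjoint T ∘L P) hP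

/-- If `T` is posinormal then `ker T ⊆ ker T*`; in particular `ker T` is a
reducing subspace for `T`. -/
theorem stmt4 {H : Type*} [NormedAddCommGroup H] [InnerProductSpace ℂ H] [CompleteSpace H]
    (T : H →L[ℂ] H) (hT : Posinormal T) :
    (∀ x : H, T x = 0 → ContinuousLinearMap.adjoint T x = 0) ∧
    (∀ x ∈ LinearMap.ker (T : H →ₗ[ℂ] H), T x ∈ LinearMap.ker (T : H →ₗ[ℂ] H)) ∧
    (∀ x ∈ (LinearMap.ker (T : H →ₗ[ℂ] H))ᗮ, T x ∈ (LinearMap.ker (T : H →ₗ[ℂ] H))ᗮ) := by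
  have hker := hT.ker_le_ker_adjoint
  refine ⟨fun x hx ↦ hker hx, fun x hx ↦ by simp_all, fun x hx ↦ ?_⟩
  exact (mem_invtSubmodule_iff_forall_mem_of_mem _).mp
    (orthogonal_ker_mem_invtSubmodule hker) x hx
end
end

section
/- Let ψ(z) = λ with λ ∈ ℂ \ {0} and φ(z) = a z with 0 < |a| < 1. Then the adjoint D_{ψ,φ}^* of the weighted composition-differentiation operator D_{ψ,φ} f = λ (f' ∘ φ) on H²(𝔻) acts on the monomial basis by D_{ψ,φ}^* z^k = (k+1) \overline{λ a^k} z^{k+1} for all k ≥ 0; consequently D_{ψ,φ}^* is a unilateral weighted shift with nonzero weights, so D_{ψ,φ} is coposinormal but not normal. -/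
open Complex Metric
open scoped InnerProductSpace

noncomputable section

/-! In the monomial basis, `D_{λ,az}` kills `1` and sends `z^(k+1)` to `λ (k+1) a^k z^k`: it is the
backward weighted shift with weights `w_k = λ (k+1) a^k`, so its adjoint is the forward shift
`z^k ↦ conj w_k z^(k+1)`. A forward weighted shift `S` with nonzero weights satisfies
`S S* = S* P S` for the diagonal operator `P = diag(0, 0, |w_0|²/|w_1|², |w_1|²/|w_2|², …)`, which
is bounded (and so positive) because `|w_k| ≤ |a|⁻¹ |w_(k+1)|`. Normality fails at the constant
function, since `D 1 = 0` but `D* 1 = conj λ z ≠ 0`. -/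

open scoped ENNReal ComplexConjugate ComplexOrder lp

namespace lp

section Diagonal

variable {ι 𝕜 : Type*} [RCLike 𝕜] {p : ℝ≥0∞}

theorem memℓp_infty_mul (d : ℓ^∞(ι, 𝕜)) (f : lp (fun _ : ι => 𝕜) p) :
    Memℓp (fun i => d i * f i) p :=
  ((lp.memℓp f).norm.const_mul ‖d‖).mono fun i => by
    rw [norm_mul]
    exact mul_le_mul_of_nonneg_right (norm_apply_le_norm ENNReal.top_ne_zero d i) (norm_nonneg _)

variable [Fact (1 ≤ p)]

def diagonal (d : ℓ^∞(ι, 𝕜)) : lp (fun _ : ι => 𝕜) p →L[𝕜] lp (fun _ : ι => 𝕜) p :=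
  LinearMap.mkContinuous
    { toFun f := ⟨fun i => d i * f i, memℓp_infty_mul d f⟩
      map_add' f g := lp.ext <| funext fun i => mul_add (d i) (f i) (g i)
      map_smul' c f := lp.ext <| funext fun i => mul_left_comm (d i) c (f i) }
    ‖d‖ fun f => by
      have hp : p ≠ 0 := (zero_lt_one.trans_le Fact.out).ne'
      calc _ ≤ ‖(‖d‖ : 𝕜) • f‖ := lp.norm_mono hp fun i => by
              simp only [LinearMap.coe_mk, AddHom.coe_mk, coeFn_smul, Pi.smul_apply, smul_eq_mul,
                norm_mul, RCLike.norm_ofReal, abs_norm]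
              exact mul_le_mul_of_nonneg_right (norm_apply_le_norm ENNReal.top_ne_zero d i)
                (norm_nonneg _)
        _ = ‖d‖ * ‖f‖ := by rw [lp.norm_const_smul hp, RCLike.norm_ofReal, abs_norm]

@[simp]
theorem diagonal_apply (d : ℓ^∞(ι, 𝕜)) (f : lp (fun _ : ι => 𝕜) p) (i : ι) :
    diagonal d f i = d i * f i := rfl

end Diagonal

theorem isPositive_diagonal {ι 𝕜 : Type*} [RCLike 𝕜] {d : ℓ^∞(ι, 𝕜)} (hd : ∀ i, 0 ≤ d i) :
    (diagonal d : ℓ²(ι, 𝕜) →L[𝕜] ℓ²(ι, 𝕜)).IsPositive := by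
  have hconj (i : ι) : conj (d i) = d i := RCLike.conj_eq_iff_im.2 (RCLike.nonneg_iff.1 (hd i)).2
  refine (ContinuousLinearMap.isPositive_iff _).2 ⟨fun f g => ?_, fun f => ?_⟩
  · simp only [ContinuousLinearMap.coe_coe, inner_eq_tsum, diagonal_apply, RCLike.inner_apply,
      map_mul, hconj]
    exact tsum_congr fun i => by ring
  · simp only [inner_eq_tsum, diagonal_apply, RCLike.inner_apply, map_mul, hconj]
    refine tsum_nonneg fun i => ?_
    rw [mul_left_comm, RCLike.mul_conj]
    exact mul_nonneg (hd i) (pow_nonneg (RCLike.ofReal_nonneg.2 (norm_nonneg _)) 2)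

section BackwardShift

variable {𝕜 : Type*} [RCLike 𝕜]

def backwardShift : ℓ²(ℕ, 𝕜) →L[𝕜] ℓ²(ℕ, 𝕜) :=
  LinearMap.mkContinuous
    { toFun f := ⟨fun k => f (k + 1),
        memℓp_gen <| (summable_nat_add_iff 1).2 <| (lp.memℓp f).summable (by norm_num)⟩
      map_add' f g := rfl
      map_smul' c f := rfl }
    1 fun f => by
      rw [one_mul]
      refine lp.norm_le_of_forall_sum_le (by norm_num) (norm_nonneg' f) fun s => ?_
      calc ∑ i ∈ s, ‖f (i + 1)‖ ^ (2 : ℝ≥0∞).toReal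
          = ∑ i ∈ s.map (addRightEmbedding 1), ‖f i‖ ^ (2 : ℝ≥0∞).toReal := by simp
        _ ≤ ‖f‖ ^ (2 : ℝ≥0∞).toReal := sum_rpow_le_norm_rpow (by norm_num) f _

@[simp]
theorem backwardShift_apply (f : ℓ²(ℕ, 𝕜)) (k : ℕ) : backwardShift f k = f (k + 1) := rfl

end BackwardShift

theorem apply_eq_inner_single {ι 𝕜 : Type*} [RCLike 𝕜] [DecidableEq ι] (f : ℓ²(ι, 𝕜)) (i : ι) :
    f i = ⟪lp.single 2 i (1 : 𝕜), f⟫_𝕜 := by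
  rw [inner_single_left, RCLike.inner_apply, map_one, mul_one]

section WeightedBackwardShift

variable {𝕜 : Type*} [RCLike 𝕜] (w : ℓ^∞(ℕ, 𝕜))

def weightedBackwardShift : ℓ²(ℕ, 𝕜) →L[𝕜] ℓ²(ℕ, 𝕜) :=
  diagonal w ∘L backwardShift

@[simp]
theorem weightedBackwardShift_apply (f : ℓ²(ℕ, 𝕜)) (k : ℕ) :
    weightedBackwardShift w f k = w k * f (k + 1) := rfl

theorem weightedBackwardShift_single_zero (c : 𝕜) :
    weightedBackwardShift w (lp.single 2 0 c) = 0 := by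
  ext k
  simp

theorem weightedBackwardShift_single_succ (k : ℕ) (c : 𝕜) :
    weightedBackwardShift w (lp.single 2 (k + 1) c) = lp.single 2 k (w k * c) := by
  ext j
  rcases eq_or_ne j k with rfl | hjk
  · simp
  · simp [hjk]

@[simp]
theorem adjoint_weightedBackwardShift_apply_zero (g : ℓ²(ℕ, 𝕜)) :
    (weightedBackwardShift w).adjoint g 0 = 0 := by
  rw [apply_eq_inner_single, ContinuousLinearMap.adjoint_inner_right,
    weightedBackwardShift_single_zero, inner_zero_left]

@[simp]
theorem adjoint_weightedBackwardShift_apply_succ (g : ℓ²(ℕ, 𝕜)) (k : ℕ) :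
    (weightedBackwardShift w).adjoint g (k + 1) = conj (w k) * g k := by
  rw [apply_eq_inner_single, ContinuousLinearMap.adjoint_inner_right,
    weightedBackwardShift_single_succ, inner_single_left, RCLike.inner_apply, mul_one, mul_comm]

theorem adjoint_weightedBackwardShift_single (k : ℕ) (c : 𝕜) :
    (weightedBackwardShift w).adjoint (lp.single 2 k c) =
      lp.single 2 (k + 1) (conj (w k) * c) := by
  ext j
  rcases j with _ | j
  · simp
  · rcases eq_or_ne j k with rfl | hjk
    · simp
    · simp [hjk]

theorem weightedBackwardShift_not_normal (hw : w 0 ≠ 0) :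
    weightedBackwardShift w ∘L (weightedBackwardShift w).adjoint ≠
      (weightedBackwardShift w).adjoint ∘L weightedBackwardShift w := by
  intro h
  have := congr($h (lp.single 2 0 1) 0)
  simp [weightedBackwardShift_single_zero, adjoint_weightedBackwardShift_single, hw] at this

end WeightedBackwardShift

def posinormalWeight (w : ℕ → ℂ) : ℕ → ℝ
  | 0 | 1 => 0
  | k + 2 => ‖w k‖ ^ 2 / ‖w (k + 1)‖ ^ 2

theorem posinormalWeight_nonneg (w : ℕ → ℂ) (k : ℕ) : 0 ≤ posinormalWeight w k := by
  rcases k with _ | _ | k <;> unfold posinormalWeight <;> positivity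

theorem posinormalWeight_le {w : ℕ → ℂ} {C : ℝ} (hC : ∀ k, ‖w k‖ ≤ C * ‖w (k + 1)‖) (k : ℕ) :
    posinormalWeight w k ≤ C ^ 2 := by
  rcases k with _ | _ | k
  · exact sq_nonneg C
  · exact sq_nonneg C
  · refine div_le_of_le_mul₀ (by positivity) (sq_nonneg C) ?_
    rw [← mul_pow]
    exact pow_le_pow_left₀ (norm_nonneg _) (hC k) 2

theorem posinormal_adjoint_weightedBackwardShift {w : ℓ^∞(ℕ, ℂ)} (hw : ∀ k, w k ≠ 0) {C : ℝ}
    (hC : ∀ k, ‖w k‖ ≤ C * ‖w (k + 1)‖) :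
    Posinormal (weightedBackwardShift w).adjoint := by
  let d : ℓ^∞(ℕ, ℂ) := ⟨fun k => posinormalWeight w k, memℓp_infty ⟨C ^ 2, by
    rintro _ ⟨k, rfl⟩
    simpa [abs_of_nonneg (posinormalWeight_nonneg w k)] using posinormalWeight_le hC k⟩⟩
  refine ⟨diagonal d,
    isPositive_diagonal fun k => Complex.zero_le_real.2 (posinormalWeight_nonneg w k), ?_⟩
  rw [ContinuousLinearMap.adjoint_adjoint]
  ext f k
  rcases k with _ | k
  · simp [d, posinormalWeight]
  · have hk : (‖w (k + 1)‖ : ℂ) ≠ 0 := by simpa using hw (k + 1)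
    simp only [ContinuousLinearMap.comp_apply, adjoint_weightedBackwardShift_apply_succ,
      weightedBackwardShift_apply, diagonal_apply, d, posinormalWeight]
    push_cast
    calc conj (w k) * (w k * f (k + 1)) = ‖w k‖ ^ 2 * f (k + 1) := by
          rw [← mul_assoc, Complex.conj_mul']
      _ = w (k + 1) * conj (w (k + 1)) * (‖w k‖ ^ 2 / ‖w (k + 1)‖ ^ 2) * f (k + 1) := by
          rw [Complex.mul_conj', mul_div_cancel₀ _ (pow_ne_zero 2 hk)]
      _ = _ := by ring

end lp

theorem summable_succ_mul_geometric {r : ℝ} (hr0 : 0 ≤ r) (hr1 : r < 1) :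
    Summable fun n : ℕ => ((n : ℝ) + 1) * r ^ n := by
  have hr : ‖r‖ < 1 := by rwa [Real.norm_of_nonneg hr0]
  refine ((summable_pow_mul_geometric_of_norm_lt_one 1 hr).add
    (summable_geometric_of_lt_one hr0 hr1)).congr fun n => ?_
  ring

theorem hasDerivAt_tsum_mul_pow {c : ℕ → ℂ} {M : ℝ} (hc : ∀ n, ‖c n‖ ≤ M) {y : ℂ}
    (hy : ‖y‖ < 1) :
    HasDerivAt (fun z => ∑' n, c n * z ^ n) (∑' n, (n + 1) * c (n + 1) * y ^ n) y := by
  obtain ⟨r, hyr, hr1⟩ := exists_between hy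
  have hr0 : 0 < r := (norm_nonneg y).trans_lt hyr
  have hM : 0 ≤ M := (norm_nonneg _).trans (hc 0)
  have hu : Summable fun n : ℕ => M * (n * r ^ (n - 1)) :=
    ((summable_nat_add_iff 1).1 <| by simpa using summable_succ_mul_geometric hr0.le hr1).mul_left M
  have hbound (n : ℕ) (z : ℂ) (hz : z ∈ ball 0 r) :
      ‖c n * (n * z ^ (n - 1))‖ ≤ M * (n * r ^ (n - 1)) := by
    rw [mem_ball_zero_iff] at hz
    rw [norm_mul, norm_mul, norm_pow, Complex.norm_natCast]
    gcongr
    exact hc n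
  have hsum0 : Summable fun n => c n * (0 : ℂ) ^ n :=
    summable_of_ne_finset_zero (s := {0}) fun n hn => by simp_all
  have hderiv := hasDerivAt_tsum_of_isPreconnected hu isOpen_ball (convex_ball 0 r).isPreconnected
    (fun n z _ => (hasDerivAt_pow n z).const_mul (c n)) hbound (mem_ball_self hr0) hsum0
    (mem_ball_zero_iff.2 hyr)
  refine hderiv.congr_deriv ?_
  rw [(Summable.of_norm_bounded hu fun n => hbound n y (mem_ball_zero_iff.2 hyr)).tsum_eq_zero_add]
  simp only [CharP.cast_eq_zero, zero_mul, mul_zero, zero_add, Nat.cast_add, Nat.cast_one,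
    Nat.add_sub_cancel]
  exact tsum_congr fun n => by ring

theorem H2.hasDerivAt_toFun (f : H2) {y : ℂ} (hy : ‖y‖ < 1) :
    HasDerivAt (H2.toFun f) (∑' n, (n + 1) * f (n + 1) * y ^ n) y :=
  hasDerivAt_tsum_mul_pow (fun n => lp.norm_apply_le_norm two_ne_zero f n) hy

def dilatedDerivWeight (l a : ℂ) (k : ℕ) : ℂ := l * (k + 1) * a ^ k

theorem norm_dilatedDerivWeight (l a : ℂ) (k : ℕ) :
    ‖dilatedDerivWeight l a k‖ = ‖l‖ * (((k : ℝ) + 1) * ‖a‖ ^ k) := by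
  rw [dilatedDerivWeight, norm_mul, norm_mul, norm_pow, ← mul_assoc]
  norm_cast

theorem memℓp_dilatedDerivWeight (l : ℂ) {a : ℂ} (ha1 : ‖a‖ < 1) :
    Memℓp (dilatedDerivWeight l a) ∞ := by
  refine memℓp_infty (Summable.tendsto_atTop_zero ?_).bddAbove_range
  simp only [norm_dilatedDerivWeight]
  exact (summable_succ_mul_geometric (norm_nonneg a) ha1).mul_left ‖l‖

theorem dilatedDerivWeight_ne_zero {l a : ℂ} (hl : l ≠ 0) (ha : a ≠ 0) (k : ℕ) :
    dilatedDerivWeight l a k ≠ 0 :=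
  mul_ne_zero (mul_ne_zero hl (Nat.cast_add_one_ne_zero k)) (pow_ne_zero k ha)

theorem norm_dilatedDerivWeight_le (l : ℂ) {a : ℂ} (ha : a ≠ 0) (k : ℕ) :
    ‖dilatedDerivWeight l a k‖ ≤ ‖a‖⁻¹ * ‖dilatedDerivWeight l a (k + 1)‖ := by
  have ha' : 0 < ‖a‖ := norm_pos_iff.2 ha
  rw [norm_dilatedDerivWeight, norm_dilatedDerivWeight, pow_succ]
  field_simp
  push_cast
  gcongr
  linarith

theorem isWCD_weightedBackwardShift {l a : ℂ} (ha1 : ‖a‖ ≤ 1) {w : ℓ^∞(ℕ, ℂ)}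
    (hw : ⇑w = dilatedDerivWeight l a) :
    IsWCD (fun _ => l) (fun z => a * z) 1 (lp.weightedBackwardShift w) := by
  intro f z hz
  have haz : ‖a * z‖ < 1 := by
    rw [norm_mul]
    exact (mul_le_of_le_one_left (norm_nonneg z) ha1).trans_lt (mem_ball_zero_iff.1 hz)
  rw [iteratedDeriv_one]
  beta_reduce
  rw [(H2.hasDerivAt_toFun f haz).deriv, H2.toFun, ← tsum_mul_left]
  refine tsum_congr fun k => ?_
  rw [lp.weightedBackwardShift_apply, hw, dilatedDerivWeight]
  ring

/-- With `ψ ≡ λ ≠ 0` and `φ(z) = a z`, `0 < |a| < 1`: the adjoint of `D_{ψ,φ}` acts by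
`D* z^k = (k+1) conj (λ a^k) z^(k+1)`, so `D_{ψ,φ}` is coposinormal but not normal. -/
theorem stmt8 (l a : ℂ) (hl : l ≠ 0) (ha0 : 0 < ‖a‖) (ha1 : ‖a‖ < 1) :
    ∃ T : H2 →L[ℂ] H2,
      IsWCD (fun _ => l) (fun z => a * z) 1 T ∧
      (∀ k : ℕ, ContinuousLinearMap.adjoint T (lp.single 2 k 1) =
        (((k : ℂ) + 1) * (starRingEnd ℂ) (l * a ^ k)) • (lp.single 2 (k + 1) 1 : H2)) ∧
      Posinormal (ContinuousLinearMap.adjoint T) ∧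
      ¬ (T ∘L ContinuousLinearMap.adjoint T = ContinuousLinearMap.adjoint T ∘L T) := by
  have ha : a ≠ 0 := norm_pos_iff.1 ha0
  let w : ℓ^∞(ℕ, ℂ) := ⟨dilatedDerivWeight l a, memℓp_dilatedDerivWeight l ha1⟩
  refine ⟨lp.weightedBackwardShift w, isWCD_weightedBackwardShift ha1.le rfl, fun k => ?_,
    lp.posinormal_adjoint_weightedBackwardShift (dilatedDerivWeight_ne_zero hl ha)
      (norm_dilatedDerivWeight_le l ha),
    lp.weightedBackwardShift_not_normal w (dilatedDerivWeight_ne_zero hl ha 0)⟩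
  rw [lp.adjoint_weightedBackwardShift_single, ← lp.single_smul, smul_eq_mul, mul_one, mul_one]
  congr 1
  simp only [w, dilatedDerivWeight, map_mul, map_add, map_one, map_pow, Complex.conj_natCast]
  ring
end
end

section
/- Let ψ: 𝔻 → ℂ be analytic and not identically zero, φ a nonconstant analytic self-map of 𝔻, n ≥ 1, with D_{ψ,φ,n} bounded and coposinormal on H²(𝔻). Then 0 cannot be a zero of ψ of multiplicity greater than n; i.e., it is impossible that ψ^{(i)}(0) = 0 for all i = 0, 1, …, n. -/
open Complex Metric
open scoped InnerProductSpace

noncomputable section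

/-!
Let `e = lp.single 2 n 1`, the coefficient sequence of `z ↦ zⁿ`. If `ψ` vanishes to order `n + 1`
at `0`, Leibniz's rule kills the `n`-th Taylor coefficient at `0` of every `T f = ψ · (f⁽ⁿ⁾ ∘ φ)`,
so `⟪e, T f⟫ = 0` for all `f`, i.e. `T* e = 0`. Coposinormality gives `ker T* ⊆ ker T`, hence
`0 = T e = n! · ψ`, contradicting `ψ ≢ 0`.
-/

namespace H2

open FormalMultilinearSeries

theorem hasFPowerSeriesOnBall_toFun (g : H2) :
    HasFPowerSeriesOnBall g.toFun (ofScalars ℂ (⇑g)) 0 1 where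
  r_le := by
    have := (ofScalars ℂ (⇑g)).le_radius_of_bound (r := 1) ‖g‖ fun k => by
      simpa [ofScalars_norm] using lp.norm_apply_le_norm two_ne_zero g k
    simpa using this
  r_pos := one_pos
  hasSum {y} hy := by
    have hy : ‖y‖ < 1 := by
      rw [mem_eball_zero_iff, enorm_eq_nnnorm] at hy
      exact_mod_cast hy
    simp only [ofScalars_apply_eq, smul_eq_mul, zero_add]
    refine (Summable.of_norm_bounded
      ((summable_geometric_of_lt_one (norm_nonneg y) hy).mul_left ‖g‖) fun k => ?_).hasSum
    rw [norm_mul, norm_pow]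
    gcongr
    exact lp.norm_apply_le_norm two_ne_zero g k

theorem analyticOnNhd_toFun (g : H2) : AnalyticOnNhd ℂ g.toFun (ball 0 1) := by
  intro z hz
  refine g.hasFPowerSeriesOnBall_toFun.analyticAt_of_mem ?_
  rw [mem_eball_zero_iff, enorm_eq_nnnorm]
  exact_mod_cast mem_ball_zero_iff.mp hz

theorem iteratedDeriv_toFun_zero (g : H2) (n : ℕ) :
    iteratedDeriv n g.toFun 0 = n.factorial * g n := by
  rw [iteratedDeriv_eq_iteratedFDeriv,
    ← g.hasFPowerSeriesOnBall_toFun.factorial_smul 1 n, ofScalars_apply_eq]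
  simp [nsmul_eq_mul]

theorem toFun_zero : (0 : H2).toFun = 0 := by
  ext z
  simp [H2.toFun]

theorem toFun_single_one (n : ℕ) : H2.toFun (lp.single 2 n 1) = (· ^ n) := by
  ext z
  rw [H2.toFun, tsum_eq_single n fun k hk => by simp [hk]]
  simp

end H2

theorem iteratedDeriv_mul_eq_zero_of_forall_iteratedDeriv_eq_zero {𝕜 𝔸 : Type*}
    [NontriviallyNormedField 𝕜] [NormedRing 𝔸] [NormedAlgebra 𝕜 𝔸] {f g : 𝕜 → 𝔸} {x : 𝕜}
    {n : ℕ} (hf : ContDiffAt 𝕜 n f x) (hg : ContDiffAt 𝕜 n g x)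
    (hf0 : ∀ i ≤ n, iteratedDeriv i f x = 0) : iteratedDeriv n (f * g) x = 0 := by
  rw [iteratedDeriv_mul hf hg]
  refine Finset.sum_eq_zero fun i hi => ?_
  rw [hf0 i (Finset.mem_range_succ_iff.mp hi), mul_zero, zero_mul]

theorem Posinormal.adjoint_apply_eq_zero {H : Type*} [NormedAddCommGroup H]
    [InnerProductSpace ℂ H] [CompleteSpace H] {S : H →L[ℂ] H} (hS : Posinormal S) {x : H}
    (hx : S x = 0) : ContinuousLinearMap.adjoint S x = 0 := by
  obtain ⟨P, -, hSP⟩ := hS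
  have h : S (ContinuousLinearMap.adjoint S x) = 0 := by
    simpa [hx] using congr($hSP x)
  rw [← inner_self_eq_zero (𝕜 := ℂ), ContinuousLinearMap.adjoint_inner_left, h,
    inner_zero_right]

namespace IsWCD

variable {ψ φ : ℂ → ℂ} {n : ℕ} {T : H2 →L[ℂ] H2}

theorem coeff_apply_eq_zero (hT : IsWCD ψ φ n T) (hψ : AnalyticAt ℂ ψ 0)
    (hφ : AnalyticAt ℂ φ 0) (hφ0 : φ 0 ∈ ball (0 : ℂ) 1)
    (hψ0 : ∀ i ≤ n, iteratedDeriv i ψ 0 = 0) (f : H2) : T f n = 0 := by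
  have hf : AnalyticAt ℂ (iteratedDeriv n f.toFun ∘ φ) 0 := by
    rw [iteratedDeriv_eq_iterate]
    exact (f.analyticOnNhd_toFun.iterated_deriv n (φ 0) hφ0).comp hφ
  have hTf : (T f).toFun =ᶠ[nhds 0] ψ * (iteratedDeriv n f.toFun ∘ φ) :=
    Filter.eventually_of_mem (ball_mem_nhds 0 one_pos) (hT f)
  have h := (T f).iteratedDeriv_toFun_zero n
  rw [hTf.iteratedDeriv_eq n, iteratedDeriv_mul_eq_zero_of_forall_iteratedDeriv_eq_zero
    hψ.contDiffAt hf.contDiffAt hψ0] at h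
  simpa [Nat.factorial_ne_zero] using h.symm

theorem toFun_apply_single_one (hT : IsWCD ψ φ n T) {z : ℂ} (hz : z ∈ ball (0 : ℂ) 1) :
    (T (lp.single 2 n 1)).toFun z = ψ z * n.factorial := by
  simp [hT _ z hz, H2.toFun_single_one, Nat.descFactorial_self]

end IsWCD

theorem stmt12_general (ψ φ : ℂ → ℂ)
    (hψ : DifferentiableOn ℂ ψ (ball (0 : ℂ) 1))
    (hψ0 : ∃ z ∈ ball (0 : ℂ) 1, ψ z ≠ 0)
    (hφ : DifferentiableOn ℂ φ (ball (0 : ℂ) 1))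
    (hφm : ∀ z ∈ ball (0 : ℂ) 1, φ z ∈ ball (0 : ℂ) 1)
    (n : ℕ)
    (T : H2 →L[ℂ] H2) (hT : IsWCD ψ φ n T)
    (hcopos : Posinormal (ContinuousLinearMap.adjoint T)) :
    ¬ (∀ i ≤ n, iteratedDeriv i ψ 0 = 0) := by
  intro hzero
  have hball : ball (0 : ℂ) 1 ∈ nhds 0 := ball_mem_nhds 0 one_pos
  have hT'e : ContinuousLinearMap.adjoint T (lp.single 2 n 1) = 0 := by
    rw [← inner_self_eq_zero (𝕜 := ℂ), ContinuousLinearMap.adjoint_inner_left,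
      lp.inner_single_left]
    simp [hT.coeff_apply_eq_zero (hψ.analyticAt hball) (hφ.analyticAt hball)
      (hφm 0 (mem_ball_self one_pos)) hzero]
  have hTe : T (lp.single 2 n 1) = 0 := by
    simpa using hcopos.adjoint_apply_eq_zero hT'e
  obtain ⟨z, hz, hψz⟩ := hψ0
  have h := hT.toFun_apply_single_one hz
  rw [hTe, H2.toFun_zero] at h
  simp [hψz, Nat.factorial_ne_zero] at h

/-- If `D_{ψ,φ,n}` is bounded and coposinormal, then `0` cannot be a zero of `ψ` of
multiplicity greater than `n`: not all of `ψ(0), ψ'(0), …, ψ⁽ⁿ⁾(0)` can vanish. -/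
theorem stmt12 (ψ φ : ℂ → ℂ)
    (hψ : DifferentiableOn ℂ ψ (ball (0 : ℂ) 1))
    (hψ0 : ∃ z ∈ ball (0 : ℂ) 1, ψ z ≠ 0)
    (hφ : DifferentiableOn ℂ φ (ball (0 : ℂ) 1))
    (hφm : ∀ z ∈ ball (0 : ℂ) 1, φ z ∈ ball (0 : ℂ) 1)
    (hφnc : ¬ ∃ c : ℂ, ∀ z ∈ ball (0 : ℂ) 1, φ z = c)
    (n : ℕ) (hn : 1 ≤ n)
    (T : H2 →L[ℂ] H2) (hT : IsWCD ψ φ n T)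
    (hcopos : Posinormal (ContinuousLinearMap.adjoint T)) :
    ¬ (∀ i ≤ n, iteratedDeriv i ψ 0 = 0) :=
  stmt12_general ψ φ hψ hψ0 hφ hφm n T hT hcopos
end
end

section
/- Let ψ(z) = 2z and φ(z) = (z+2)/5 on 𝔻. Then D_{ψ,φ} f = ψ · (f' ∘ φ) is bounded on H²(𝔻), ψ(0) = 0, yet D_{ψ,φ} is not posinormal. Hence the vanishing conditions ψ^{(m)}(0) = 0 for 0 ≤ m < n are necessary but not sufficient for posinormality of D_{ψ,φ,n}. -/
open Complex Metric
open scoped InnerProductSpace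

noncomputable section

/-! With `ψ(z) = c z`, `φ(z) = a z + b` and `‖a‖ + ‖b‖ < 1`, the columns
`D_{ψ,φ}(z^k) = c k z φ(z)^(k-1)` have norm at most `‖c‖ k (‖a‖ + ‖b‖)^(k-1)`, so `T = D_{ψ,φ}` is
the norm-convergent sum of the rank-one maps `e_k ↦ D_{ψ,φ}(z^k)`. Posinormality would give
`‖T* x‖ ≤ C ‖T x‖`. For `x = (z - b)^(n+1)` we get `T x = c (n+1) a^n z^(n+1)`, while
`⟪T* x, z⟫ = ⟪x, T z⟫ = ⟪x, c z⟫` has modulus `‖c‖ (n+1) ‖b‖^n`; the ratio `(‖b‖/‖a‖)^n` is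
unbounded when `‖a‖ < ‖b‖`. -/

open Polynomial InnerProductSpace

lemma summable_nat_mul_pow_pred {r : ℝ} (hr₀ : 0 ≤ r) (hr : r < 1) :
    Summable fun k : ℕ => (k : ℝ) * r ^ (k - 1) := by
  rw [← summable_nat_add_iff 1]
  have hr' : ‖r‖ < 1 := by rwa [Real.norm_of_nonneg hr₀]
  refine ((summable_pow_mul_geometric_of_norm_lt_one 1 hr').add
    (summable_geometric_of_lt_one hr₀ hr)).congr fun k => ?_
  push_cast
  simp only [pow_one]
  ring

open ContinuousLinearMap in
lemma Posinormal.exists_norm_adjoint_apply_sq_le {H : Type*} [NormedAddCommGroup H]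
    [InnerProductSpace ℂ H] [CompleteSpace H] {T : H →L[ℂ] H} (hT : Posinormal T) :
    ∃ C : ℝ, ∀ x, ‖adjoint T x‖ ^ 2 ≤ C * ‖T x‖ ^ 2 := by
  obtain ⟨P, -, hP⟩ := hT
  refine ⟨‖P‖, fun x => ?_⟩
  have hTT : T (adjoint T x) = adjoint T (P (T x)) := congr($hP x)
  calc ‖adjoint T x‖ ^ 2 = RCLike.re ⟪T x, P (T x)⟫_ℂ := by
        rw [← inner_self_eq_norm_sq (𝕜 := ℂ), adjoint_inner_left, hTT, adjoint_inner_right]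
    _ ≤ ‖T x‖ * ‖P (T x)‖ := (RCLike.re_le_norm _).trans (norm_inner_le_norm _ _)
    _ ≤ ‖T x‖ * (‖P‖ * ‖T x‖) := by gcongr; exact P.le_opNorm _
    _ = ‖P‖ * ‖T x‖ ^ 2 := by ring

lemma exists_mul_pow_lt_pow {s t : ℝ} (hs : 0 ≤ s) (hst : s < t) (C : ℝ) :
    ∃ n : ℕ, C * s ^ n < t ^ n := by
  have ht : 0 < t := hs.trans_lt hst
  have hlim : Filter.Tendsto (fun n : ℕ => C * (s / t) ^ n) Filter.atTop (nhds 0) := by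
    simpa using (tendsto_pow_atTop_nhds_zero_of_lt_one (div_nonneg hs ht.le)
      ((div_lt_one ht).mpr hst)).const_mul C
  obtain ⟨n, hn⟩ := (hlim.eventually (gt_mem_nhds one_pos)).exists
  refine ⟨n, ?_⟩
  calc C * s ^ n = C * (s / t) ^ n * t ^ n := by rw [div_pow]; field_simp
    _ < 1 * t ^ n := by gcongr
    _ = t ^ n := one_mul _

lemma memℓp_of_summable_sq {α E : Type*} [NormedAddCommGroup E] {f : α → E}
    (hf : Summable fun k => ‖f k‖ ^ 2) : Memℓp f 2 :=
  memℓp_gen (by simpa using hf)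

namespace H2

lemma inner_single_one_left (k : ℕ) (f : H2) : ⟪lp.single 2 k (1 : ℂ), f⟫_ℂ = f k := by
  simp [lp.inner_single_left]

def ofPolynomial : ℂ[X] →ₗ[ℂ] H2 where
  toFun p := ⟨fun k => p.coeff k, memℓp_of_summable_sq <|
    summable_of_ne_finset_zero (s := p.support) fun k hk => by simp [notMem_support_iff.mp hk]⟩
  map_add' p q := by ext k; exact coeff_add p q k
  map_smul' c p := by ext k; exact coeff_smul c p k

@[simp] lemma ofPolynomial_apply (p : ℂ[X]) (k : ℕ) : ofPolynomial p k = p.coeff k := rfl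

lemma ofPolynomial_monomial (n : ℕ) (c : ℂ) : ofPolynomial (monomial n c) = lp.single 2 n c := by
  ext k
  simp [coeff_monomial, lp.single_apply, Pi.single_apply, eq_comm]

lemma norm_ofPolynomial_C_mul_X_pow (n : ℕ) (c : ℂ) : ‖ofPolynomial (C c * X ^ n)‖ = ‖c‖ := by
  rw [C_mul_X_pow_eq_monomial, ofPolynomial_monomial, lp.norm_single (by norm_num)]

lemma norm_ofPolynomial_sum_le {ι : Type*} (s : Finset ι) (c : ι → ℂ) (n : ι → ℕ) :
    ‖ofPolynomial (∑ i ∈ s, C (c i) * X ^ n i)‖ ≤ ∑ i ∈ s, ‖c i‖ := by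
  rw [map_sum]
  exact (norm_sum_le _ _).trans_eq (by simp only [norm_ofPolynomial_C_mul_X_pow])

lemma toFun_ofPolynomial (p : ℂ[X]) (z : ℂ) : toFun (ofPolynomial p) z = p.eval z := by
  rw [eval_eq_sum_range' (lt_add_one p.natDegree), toFun]
  refine tsum_eq_sum fun k hk => ?_
  simp [coeff_eq_zero_of_natDegree_lt (by simpa using hk : p.natDegree < k)]

def kernel {w : ℂ} (hw : ‖w‖ < 1) : H2 :=
  ⟨fun k => starRingEnd ℂ w ^ k, memℓp_of_summable_sq <| by
    refine (summable_geometric_of_lt_one (sq_nonneg ‖w‖) ?_).congr fun k => ?_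
    · nlinarith [norm_nonneg w]
    · rw [norm_pow, Complex.norm_conj, ← pow_mul, ← pow_mul, mul_comm]⟩

lemma toFun_eq_inner_kernel (f : H2) {w : ℂ} (hw : ‖w‖ < 1) :
    toFun f w = ⟪kernel hw, f⟫_ℂ := by
  rw [lp.inner_eq_tsum, toFun]
  congr! 2 with k
  simp [kernel, mul_comm]

lemma hasDerivAt_toFun_s18 (f : H2) {w : ℂ} (hw : ‖w‖ < 1) :
    HasDerivAt (toFun f) (∑' k : ℕ, f k * (k * w ^ (k - 1))) w := by
  obtain ⟨r, hwr, hr⟩ := exists_between hw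
  have hr₀ : 0 ≤ r := (norm_nonneg w).trans hwr.le
  refine hasDerivAt_tsum_of_isPreconnected ((summable_nat_mul_pow_pred hr₀ hr).mul_left ‖f‖)
    isOpen_ball (convex_ball (0 : ℂ) r).isPreconnected
    (fun k y _ => by simpa using (hasDerivAt_pow k y).const_mul (f k)) (fun k y hy => ?_)
    (mem_ball_self ((norm_nonneg w).trans_lt hwr)) ?_ (mem_ball_zero_iff.mpr hwr)
  · have hy : ‖y‖ ≤ r := (mem_ball_zero_iff.mp hy).le
    rw [norm_mul, norm_mul, norm_pow, Complex.norm_natCast]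
    gcongr
    exact lp.norm_apply_le_norm two_ne_zero f k
  · exact summable_of_ne_finset_zero (s := {0}) fun k hk => by simp [zero_pow (by simpa using hk)]

section Operator

variable (c a b : ℂ)

def wcdPoly : ℂ[X] →ₗ[ℂ] ℂ[X] where
  toFun p := C c * X * (derivative p).comp (C a * X + C b)
  map_add' p q := by simp [add_comp, mul_add]
  map_smul' r p := by simp [smul_comp]

lemma wcdPoly_apply (p : ℂ[X]) :
    wcdPoly c a b p = C c * X * (derivative p).comp (C a * X + C b) := rfl

lemma wcdPoly_X_pow (k : ℕ) :
    wcdPoly c a b (X ^ k) = C (c * k) * (X * (C a * X + C b) ^ (k - 1)) := by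
  simp only [wcdPoly_apply, derivative_X_pow, mul_comp, C_comp, X_pow_comp, C_mul]
  ring

lemma norm_ofPolynomial_X_mul_pow_le (n : ℕ) :
    ‖ofPolynomial (X * (C a * X + C b) ^ n)‖ ≤ (‖a‖ + ‖b‖) ^ n := by
  have hexp : X * (C a * X + C b) ^ n =
      ∑ m ∈ Finset.range (n + 1), C (a ^ m * b ^ (n - m) * n.choose m) * X ^ (m + 1) := by
    simp only [add_pow, Finset.mul_sum, C_mul, C_pow, map_natCast]
    refine Finset.sum_congr rfl fun m _ => ?_
    ring
  rw [hexp, add_pow]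
  refine (norm_ofPolynomial_sum_le _ _ _).trans_eq (Finset.sum_congr rfl fun m _ => ?_)
  simp

def wcdColumn (k : ℕ) : H2 := ofPolynomial (wcdPoly c a b (X ^ k))

lemma norm_wcdColumn_le (k : ℕ) :
    ‖wcdColumn c a b k‖ ≤ ‖c‖ * (k * (‖a‖ + ‖b‖) ^ (k - 1)) := by
  rw [wcdColumn, wcdPoly_X_pow, ← smul_eq_C_mul, map_smul, norm_smul, norm_mul,
    Complex.norm_natCast, mul_assoc]
  gcongr
  exact norm_ofPolynomial_X_mul_pow_le a b _

/-- The series converges in norm when `‖a‖ + ‖b‖ < 1`; otherwise `tsum` makes this `0`. -/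
def wcdOp : H2 →L[ℂ] H2 := ∑' k, rankOne ℂ (wcdColumn c a b k) (lp.single 2 k 1)

variable {a b}

lemma hasSum_wcdOp_apply (hab : ‖a‖ + ‖b‖ < 1) (f : H2) :
    HasSum (fun k => f k • wcdColumn c a b k) (wcdOp c a b f) := by
  have hsum : Summable fun k => rankOne ℂ (wcdColumn c a b k) (lp.single 2 k (1 : ℂ)) := by
    refine .of_norm_bounded ((summable_nat_mul_pow_pred (by positivity) hab).mul_left ‖c‖)
      fun k => ?_
    rw [norm_rankOne, lp.norm_single (by norm_num), norm_one, mul_one]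
    exact norm_wcdColumn_le c a b k
  have h := hsum.hasSum.mapL (ContinuousLinearMap.apply ℂ H2 f)
  simp only [ContinuousLinearMap.apply_apply, rankOne_apply, inner_single_one_left] at h
  exact h

lemma wcdOp_ofPolynomial (hab : ‖a‖ + ‖b‖ < 1) (p : ℂ[X]) :
    wcdOp c a b (ofPolynomial p) = ofPolynomial (wcdPoly c a b p) := by
  have hfin : ofPolynomial (wcdPoly c a b p) =
      ∑ k ∈ Finset.range (p.natDegree + 1), p.coeff k • wcdColumn c a b k := by
    conv_lhs => rw [p.as_sum_range_C_mul_X_pow]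
    simp only [map_sum, ← smul_eq_C_mul, map_smul, wcdColumn]
  rw [hfin]
  refine (hasSum_wcdOp_apply c hab _).unique (hasSum_sum_of_ne_finset_zero fun k hk => ?_)
  simp [coeff_eq_zero_of_natDegree_lt (by simpa [Nat.lt_succ_iff] using hk : p.natDegree < k)]

lemma isWCD_wcdOp (hab : ‖a‖ + ‖b‖ < 1) :
    IsWCD (fun z => c * z) (fun z => a * z + b) 1 (wcdOp c a b) := by
  intro f z hz
  have hz : ‖z‖ < 1 := mem_ball_zero_iff.mp hz
  have hφz : ‖a * z + b‖ < 1 := by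
    calc ‖a * z + b‖ ≤ ‖a‖ * ‖z‖ + ‖b‖ := (norm_add_le _ _).trans_eq (by rw [norm_mul])
      _ ≤ ‖a‖ + ‖b‖ := by gcongr; nlinarith [norm_nonneg a]
      _ < 1 := hab
  have hcol (k : ℕ) : toFun (wcdColumn c a b k) z = c * z * (k * (a * z + b) ^ (k - 1)) := by
    rw [wcdColumn, toFun_ofPolynomial, wcdPoly_X_pow]
    simp only [eval_mul, eval_C, eval_X, eval_pow, eval_add]
    ring
  have hsum := (hasSum_wcdOp_apply c hab f).mapL (innerSL ℂ (kernel hz))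
  simp only [innerSL_apply_apply, inner_smul_right] at hsum
  simp only [← toFun_eq_inner_kernel _ hz, hcol] at hsum
  rw [iteratedDeriv_one, (hasDerivAt_toFun_s18 f hφz).deriv, ← hsum.tsum_eq, ← tsum_mul_left]
  exact tsum_congr fun k => by ring

lemma wcdPoly_X_sub_C_pow (n : ℕ) :
    wcdPoly c a b ((X - C b) ^ (n + 1)) = C (c * (n + 1) * a ^ n) * X ^ (n + 1) := by
  have hφ : (X - C b).comp (C a * X + C b) = C a * X := by
    rw [sub_comp, X_comp, C_comp, add_sub_cancel_right]
  rw [wcdPoly_apply, derivative_X_sub_C_pow, Nat.add_sub_cancel, mul_comp, C_comp, pow_comp, hφ]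
  simp only [C_mul, C_pow, C_add, C_1, map_natCast, mul_pow, Nat.cast_add, Nat.cast_one]
  ring

lemma norm_wcdOp_ofPolynomial_X_sub_C_pow (hab : ‖a‖ + ‖b‖ < 1) (n : ℕ) :
    ‖wcdOp c a b (ofPolynomial ((X - C b) ^ (n + 1)))‖ = ‖c‖ * (n + 1) * ‖a‖ ^ n := by
  rw [wcdOp_ofPolynomial c hab, wcdPoly_X_sub_C_pow, norm_ofPolynomial_C_mul_X_pow]
  simp only [norm_mul, norm_pow]
  norm_cast

lemma le_norm_adjoint_wcdOp_ofPolynomial_X_sub_C_pow (hab : ‖a‖ + ‖b‖ < 1) (n : ℕ) :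
    ‖c‖ * (n + 1) * ‖b‖ ^ n ≤
      ‖ContinuousLinearMap.adjoint (wcdOp c a b) (ofPolynomial ((X - C b) ^ (n + 1)))‖ := by
  set x := ofPolynomial ((X - C b) ^ (n + 1))
  have hX : wcdOp c a b (lp.single 2 1 1) = lp.single 2 1 c := by
    rw [← ofPolynomial_monomial, ← ofPolynomial_monomial, monomial_one_one_eq_X,
      wcdOp_ofPolynomial c hab]
    simp [wcdPoly_apply, ← C_mul_X_eq_monomial]
  have hinner : ⟪ContinuousLinearMap.adjoint (wcdOp c a b) x, lp.single 2 1 1⟫_ℂ =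
      starRingEnd ℂ ((n + 1) * (-b) ^ n) * c := by
    rw [ContinuousLinearMap.adjoint_inner_left, hX, lp.inner_single_right]
    rw [ofPolynomial_apply, sub_eq_add_neg, ← C_neg, coeff_X_add_C_pow]
    simp [mul_comm]
  calc ‖c‖ * (n + 1) * ‖b‖ ^ n
      = ‖⟪ContinuousLinearMap.adjoint (wcdOp c a b) x, lp.single 2 1 1⟫_ℂ‖ := by
        rw [hinner]
        simp only [norm_mul, norm_pow, Complex.norm_conj, norm_neg]
        norm_cast
        ring
    _ ≤ _ := by
        simpa [lp.norm_single] using norm_inner_le_norm (𝕜 := ℂ)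
          (ContinuousLinearMap.adjoint (wcdOp c a b) x) (lp.single 2 1 (1 : ℂ))

lemma not_posinormal_wcdOp (hab : ‖a‖ + ‖b‖ < 1) (hlt : ‖a‖ < ‖b‖) (hc : c ≠ 0) :
    ¬ Posinormal (wcdOp c a b) := by
  intro hT
  obtain ⟨K, hK⟩ := hT.exists_norm_adjoint_apply_sq_le
  obtain ⟨n, hn⟩ := exists_mul_pow_lt_pow (sq_nonneg ‖a‖)
    (pow_lt_pow_left₀ hlt (norm_nonneg a) two_ne_zero) K
  have hx := hK (ofPolynomial ((X - C b) ^ (n + 1)))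
  rw [norm_wcdOp_ofPolynomial_X_sub_C_pow c hab] at hx
  have hle : (‖c‖ * (n + 1)) ^ 2 * (‖b‖ ^ 2) ^ n ≤ (‖c‖ * (n + 1)) ^ 2 * (K * (‖a‖ ^ 2) ^ n) :=
    calc (‖c‖ * (n + 1)) ^ 2 * (‖b‖ ^ 2) ^ n = (‖c‖ * (n + 1) * ‖b‖ ^ n) ^ 2 := by ring
      _ ≤ _ := by gcongr; exact le_norm_adjoint_wcdOp_ofPolynomial_X_sub_C_pow c hab n
      _ ≤ _ := hx
      _ = _ := by ring
  exact (le_of_mul_le_mul_left hle (by positivity)).not_gt hn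

end Operator

end H2

/-- With `ψ(z) = 2z` and `φ(z) = (z+2)/5`: `D_{ψ,φ}` is bounded on `H²(𝔻)` and `ψ(0) = 0`,
yet `D_{ψ,φ}` is not posinormal. So the vanishing conditions of Theorem 2.7 are
necessary but not sufficient for posinormality. -/
theorem stmt18 :
    (2 * (0 : ℂ) = 0) ∧
    ∃ T : H2 →L[ℂ] H2,
      IsWCD (fun z => 2 * z) (fun z => (z + 2) / 5) 1 T ∧ ¬ Posinormal T := by
  have hab : ‖(5⁻¹ : ℂ)‖ + ‖(2 / 5 : ℂ)‖ < 1 := by norm_num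
  have hlt : ‖(5⁻¹ : ℂ)‖ < ‖(2 / 5 : ℂ)‖ := by norm_num
  have hφ : (fun z : ℂ => (z + 2) / 5) = fun z => 5⁻¹ * z + 2 / 5 := by
    funext z
    ring
  exact ⟨mul_zero 2, H2.wcdOp 2 5⁻¹ (2 / 5), hφ ▸ H2.isWCD_wcdOp 2 hab,
    H2.not_posinormal_wcdOp 2 hab hlt two_ne_zero⟩
end
end
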